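/- arXiv:2007.04491 — 2 statements merged into one kernel-verified Lean document; each statement's English description precedes it below -/
import Mathlib

section
/- Let f : ℝ³ → ℂ be continuously differentiable with ‖f‖_{L²} ≤ a and ‖∇f‖_{L^∞} ≤ b, where a, b > 0. Then ‖f‖_{L^∞} ≤ C (a² b³)^{1/5} for a universal constant C. -/
open MeasureTheory Metric Module
open scoped NNReal ENNReal

/-!
A `K`-Lipschitz function stays above `‖f x‖ / 2` on the ball of radius `‖f x‖ / (2K)` around `x`,
so Chebyshev's inequality gives `(‖f x‖ / 2) ^ p · μ (ball) ≤ ‖f‖ₚ ^ p`. For Lebesgue measure on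
`ℝ³` and `p = 2` the ball has volume `≈ (‖f x‖ / b) ^ 3`, whence `‖f x‖ ^ 5 ≲ a ^ 2 b ^ 3`.
-/

theorem LipschitzWith.half_norm_le_norm_of_mem_ball {α F : Type*} [PseudoMetricSpace α]
    [SeminormedAddCommGroup F] {K : ℝ≥0} {f : α → F} (hf : LipschitzWith K f) {x y : α}
    (hy : y ∈ ball x (‖f x‖ / (2 * K))) : ‖f x‖ / 2 ≤ ‖f y‖ := by
  have hK : (K : ℝ) ≠ 0 := by
    rintro hK
    simp [hK] at hy
  have hclose : ‖f y - f x‖ ≤ ‖f x‖ / 2 := calc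
    ‖f y - f x‖ = dist (f y) (f x) := (dist_eq_norm _ _).symm
    _ ≤ K * dist y x := hf.dist_le_mul y x
    _ ≤ K * (‖f x‖ / (2 * K)) := by gcongr; exact (mem_ball.mp hy).le
    _ = ‖f x‖ / 2 := by field_simp
  linarith [norm_sub_norm_le (f x) (f y), norm_sub_rev (f y) (f x)]

theorem LipschitzWith.rpow_mul_measure_ball_le_eLpNorm_rpow {α F : Type*} [PseudoMetricSpace α]
    [SecondCountableTopology α] [MeasurableSpace α] [OpensMeasurableSpace α]
    [NormedAddCommGroup F] (μ : Measure α) {K : ℝ≥0} {f : α → F} (hf : LipschitzWith K f)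
    {p : ℝ≥0∞} (hp0 : p ≠ 0) (hptop : p ≠ ∞) (x : α) :
    ENNReal.ofReal (‖f x‖ / 2) ^ p.toReal * μ (ball x (‖f x‖ / (2 * K)))
      ≤ eLpNorm f p μ ^ p.toReal := calc
  _ ≤ ENNReal.ofReal (‖f x‖ / 2) ^ p.toReal * μ {y | ENNReal.ofReal (‖f x‖ / 2) ≤ ‖f y‖ₑ} := by
      gcongr
      intro y hy
      rw [Set.mem_ofPred_eq, ← ofReal_norm]
      exact ENNReal.ofReal_le_ofReal (hf.half_norm_le_norm_of_mem_ball hy)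
  _ ≤ eLpNorm f p μ ^ p.toReal :=
      mul_meas_ge_le_pow_eLpNorm' μ hp0 hptop hf.continuous.aestronglyMeasurable _

theorem LipschitzWith.rpow_mul_pow_mul_measure_unitBall_le {E F : Type*} [NormedAddCommGroup E]
    [NormedSpace ℝ E] [FiniteDimensional ℝ E] [Nontrivial E] [MeasurableSpace E] [BorelSpace E]
    [NormedAddCommGroup F] (μ : Measure E) [μ.IsAddHaarMeasure] {K : ℝ≥0} {f : E → F}
    (hf : LipschitzWith K f) {p : ℝ≥0∞} (hp0 : p ≠ 0) (hptop : p ≠ ∞) {a : ℝ} (ha : 0 ≤ a)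
    (hfa : eLpNorm f p μ ≤ ENNReal.ofReal a) (x : E) :
    (‖f x‖ / 2) ^ p.toReal * (‖f x‖ / (2 * K)) ^ finrank ℝ E * (μ (ball 0 1)).toReal
      ≤ a ^ p.toReal := by
  have key : ENNReal.ofReal ((‖f x‖ / 2) ^ p.toReal * (‖f x‖ / (2 * K)) ^ finrank ℝ E)
      * μ (ball 0 1) ≤ ENNReal.ofReal (a ^ p.toReal) := calc
    _ = ENNReal.ofReal (‖f x‖ / 2) ^ p.toReal * μ (ball x (‖f x‖ / (2 * K))) := by
      rw [ENNReal.ofReal_mul (by positivity), ENNReal.ofReal_rpow_of_nonneg (by positivity)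
        ENNReal.toReal_nonneg, mul_assoc, Measure.addHaar_ball μ x (by positivity)]
    _ ≤ eLpNorm f p μ ^ p.toReal := hf.rpow_mul_measure_ball_le_eLpNorm_rpow μ hp0 hptop x
    _ ≤ ENNReal.ofReal a ^ p.toReal := by gcongr
    _ = ENNReal.ofReal (a ^ p.toReal) := ENNReal.ofReal_rpow_of_nonneg ha ENNReal.toReal_nonneg
  rwa [← ENNReal.ofReal_toReal measure_ball_lt_top.ne, ← ENNReal.ofReal_mul (by positivity),
    ENNReal.ofReal_le_ofReal_iff (by positivity)] at key

/-- If `f : ℝ³ → ℂ` is `C¹` with `‖f‖_{L²} ≤ a` and `‖∇f‖_{L^∞} ≤ b` (`a, b > 0`),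
then `‖f‖_{L^∞} ≤ C (a² b³)^{1/5}` for a universal constant `C`. -/
theorem stmt_0 :
    ∃ C : ℝ, 0 < C ∧
      ∀ (f : EuclideanSpace ℝ (Fin 3) → ℂ) (a b : ℝ), 0 < a → 0 < b →
        ContDiff ℝ 1 f →
        eLpNorm f 2 volume ≤ ENNReal.ofReal a →
        (∀ x, ‖fderiv ℝ f x‖ ≤ b) →
        ∀ x, ‖f x‖ ≤ C * (a ^ 2 * b ^ 3) ^ ((1 : ℝ) / 5) := by
  set v := (volume (ball (0 : EuclideanSpace ℝ (Fin 3)) 1)).toReal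
  have hv : 0 < v := ENNReal.toReal_pos (measure_ball_pos _ _ one_pos).ne' measure_ball_lt_top.ne
  refine ⟨(32 / v) ^ ((1 : ℝ) / 5), by positivity, fun f a b ha hb hf hfa hfb x ↦ ?_⟩
  have hlip : LipschitzWith b.toNNReal f :=
    lipschitzWith_of_nnnorm_fderiv_le (hf.differentiable one_ne_zero) fun y ↦ by
      simpa [← NNReal.coe_le_coe, hb.le] using hfb y
  have hbound := hlip.rpow_mul_pow_mul_measure_unitBall_le volume two_ne_zero ENNReal.ofNat_ne_top
    ha.le hfa x
  simp only [finrank_euclideanSpace_fin, ENNReal.toReal_ofNat, Real.rpow_two,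
    Real.coe_toNNReal _ hb.le] at hbound
  set c := ‖f x‖
  have hc5 : c ^ 5 ≤ 32 / v * (a ^ 2 * b ^ 3) := by
    rw [div_mul_eq_mul_div, le_div_iff₀ hv]
    have : (c / 2) ^ 2 * (c / (2 * b)) ^ 3 * v = c ^ 5 * v / (32 * b ^ 3) := by
      field_simp; ring
    rw [this, div_le_iff₀ (by positivity)] at hbound
    linarith
  rw [← Real.mul_rpow (by positivity) (by positivity), one_div,
    Real.le_rpow_inv_iff_of_pos (norm_nonneg _) (by positivity) (by norm_num)]
  exact_mod_cast hc5
end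

section
/- Let f : ℝ³ → ℂ satisfy ‖f‖_{L²} ≤ a₁, ‖∇f‖_{L²} ≤ a₂, and suppose both ‖∇f‖_{L^∞} ≤ b and ‖∇²f‖_{L^∞} ≤ b (as follows from an H⁴ bound via Sobolev embedding). Then ‖f‖_{L^∞} ≤ C a₁^{2/5} a₂^{6/25} b^{9/25} for a universal constant C. -/
/-!
If `g` is `L`-Lipschitz and `‖g x₀‖ = M`, then `‖g‖ ≥ M / 2` on the ball of radius `M / (2L)`
about `x₀`, whose Haar measure is `≍ (M / L)ⁿ`. Chebyshev's inequality then gives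
`M ^ (n + 2) ≲ ‖g‖₂² Lⁿ`, i.e. `‖g‖_∞ ≲ ‖g‖₂ ^ (2 / (n + 2)) L ^ (n / (n + 2))`.
In `ℝ³` this is applied first to `∇f`, which is `b`-Lipschitz, giving `‖∇f‖_∞ ≲ a₂^{2/5} b^{3/5}`,
and then to `f`, which is Lipschitz with that constant; hence the exponents
`6/25 = (2/5)(3/5)` and `9/25 = (3/5)(3/5)`.
-/

open MeasureTheory Metric Module

section Interpolation

variable {E F : Type*} [NormedAddCommGroup E] [NormedSpace ℝ E] [FiniteDimensional ℝ E]
  [MeasurableSpace E] [NormedAddCommGroup F]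

theorem toReal_measure_ball_pos (μ : Measure E) [μ.IsAddHaarMeasure] (x : E) {r : ℝ}
    (hr : 0 < r) : 0 < (μ (ball x r)).toReal :=
  ENNReal.toReal_pos (measure_ball_pos μ x hr).ne' measure_ball_lt_top.ne

theorem norm_pow_mul_measure_ball_le_of_eLpNorm_le [BorelSpace E] [Nontrivial E]
    (μ : Measure E) [μ.IsAddHaarMeasure] {g : E → F} {A L : ℝ} (hL : 0 < L)
    (hg : ∀ x y, dist (g x) (g y) ≤ L * dist x y) (hA : eLpNorm g 2 μ ≤ ENNReal.ofReal A)
    (x₀ : E) :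
    ‖g x₀‖ ^ (finrank ℝ E + 2) * (μ (ball 0 1)).toReal
      ≤ 2 ^ (finrank ℝ E + 2) * A ^ 2 * L ^ finrank ℝ E := by
  rcases (norm_nonneg (g x₀)).eq_or_lt with hM | hM
  · rw [← hM, zero_pow (by omega), zero_mul]
    positivity
  have hball : ball x₀ (‖g x₀‖ / (2 * L)) ⊆ {y | ENNReal.ofReal (‖g x₀‖ / 2) ≤ ‖g y‖ₑ} := by
    intro y hy
    rw [Set.mem_ofPred_eq, ← ofReal_norm]
    refine ENNReal.ofReal_le_ofReal ?_
    have hdist : L * dist x₀ y < ‖g x₀‖ / 2 :=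
      calc L * dist x₀ y < L * (‖g x₀‖ / (2 * L)) := by gcongr; rwa [dist_comm]
        _ = ‖g x₀‖ / 2 := by field_simp
    have hlip : ‖g x₀ - g y‖ ≤ L * dist x₀ y := dist_eq_norm (g x₀) (g y) ▸ hg x₀ y
    linarith [norm_sub_norm_le (g x₀) (g y)]
  have hcheb := mul_meas_ge_le_pow_eLpNorm' μ two_ne_zero ENNReal.ofNat_ne_top
    (LipschitzWith.of_dist_le' hg).continuous.aestronglyMeasurable (ENNReal.ofReal (‖g x₀‖ / 2))
  have hK : μ (ball 0 1) = ENNReal.ofReal (μ (ball 0 1)).toReal :=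
    (ENNReal.ofReal_toReal measure_ball_lt_top.ne).symm
  have hmass : (‖g x₀‖ / 2) ^ 2 * ((‖g x₀‖ / (2 * L)) ^ finrank ℝ E * (μ (ball 0 1)).toReal)
      ≤ A ^ 2 := by
    have := (mul_le_mul_right (measure_mono hball) _).trans hcheb |>.trans
      (ENNReal.rpow_le_rpow hA (by norm_num))
    rw [μ.addHaar_ball x₀ (by positivity), hK] at this
    have := ENNReal.toReal_mono (by simp) this
    simp only [ENNReal.toReal_mul, ← ENNReal.toReal_rpow, ENNReal.toReal_ofNat, Real.rpow_two,
      ENNReal.toReal_ofReal (by positivity : 0 ≤ ‖g x₀‖ / 2),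
      ENNReal.toReal_ofReal (by positivity : (0 : ℝ) ≤ (‖g x₀‖ / (2 * L)) ^ finrank ℝ E),
      ENNReal.toReal_ofReal ENNReal.toReal_nonneg, ENNReal.toReal_ofReal'] at this
    refine this.trans ?_
    rcases le_total 0 A with h | h
    · simp [h]
    · simp [h]; positivity
  calc ‖g x₀‖ ^ (finrank ℝ E + 2) * (μ (ball 0 1)).toReal
      = (‖g x₀‖ / 2) ^ 2 * ((‖g x₀‖ / (2 * L)) ^ finrank ℝ E * (μ (ball 0 1)).toReal)
          * (2 ^ (finrank ℝ E + 2) * L ^ finrank ℝ E) := by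
        rw [div_pow, div_pow, mul_pow]
        field_simp
        ring
    _ ≤ A ^ 2 * (2 ^ (finrank ℝ E + 2) * L ^ finrank ℝ E) := by gcongr
    _ = 2 ^ (finrank ℝ E + 2) * A ^ 2 * L ^ finrank ℝ E := by ring

noncomputable def interpolationConstant (μ : Measure E) : ℝ :=
  (2 ^ (finrank ℝ E + 2) / (μ (ball 0 1)).toReal) ^ ((1 : ℝ) / (finrank ℝ E + 2))

theorem interpolationConstant_pos (μ : Measure E) [μ.IsAddHaarMeasure] :
    0 < interpolationConstant μ := by
  have := toReal_measure_ball_pos μ 0 one_pos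
  unfold interpolationConstant
  positivity

theorem norm_le_interpolationConstant_mul [BorelSpace E] [Nontrivial E] (μ : Measure E)
    [μ.IsAddHaarMeasure] {g : E → F} {A L : ℝ} (hA₀ : 0 ≤ A) (hL : 0 < L)
    (hg : ∀ x y, dist (g x) (g y) ≤ L * dist x y) (hA : eLpNorm g 2 μ ≤ ENNReal.ofReal A)
    (x₀ : E) :
    ‖g x₀‖ ≤ interpolationConstant μ * A ^ ((2 : ℝ) / (finrank ℝ E + 2))
      * L ^ ((finrank ℝ E : ℝ) / (finrank ℝ E + 2)) := by
  have hpow : ‖g x₀‖ ^ (finrank ℝ E + 2)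
      ≤ 2 ^ (finrank ℝ E + 2) / (μ (ball 0 1)).toReal * A ^ 2 * L ^ finrank ℝ E := by
    rw [mul_assoc, div_mul_eq_mul_div, le_div_iff₀ (toReal_measure_ball_pos μ 0 one_pos),
      ← mul_assoc]
    exact norm_pow_mul_measure_ball_le_of_eLpNorm_le μ hL hg hA x₀
  have hroot := Real.rpow_le_rpow (by positivity) hpow
    (by positivity : (0 : ℝ) ≤ 1 / (finrank ℝ E + 2))
  have hk : ((finrank ℝ E + 2 : ℕ) : ℝ) = finrank ℝ E + 2 := by push_cast; ring
  rwa [← Real.rpow_natCast, ← Real.rpow_mul (norm_nonneg _), hk,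
    mul_one_div_cancel (by positivity), Real.rpow_one,
    Real.mul_rpow (by positivity) (by positivity), Real.mul_rpow (by positivity) (by positivity),
    ← Real.rpow_natCast A, ← Real.rpow_natCast L, ← Real.rpow_mul hA₀, ← Real.rpow_mul hL.le,
    mul_one_div, mul_one_div] at hroot

end Interpolation

theorem norm_le_interpolationConstant_mul_fin_three {F : Type*} [NormedAddCommGroup F]
    {g : EuclideanSpace ℝ (Fin 3) → F} {A L : ℝ} (hA₀ : 0 ≤ A) (hL : 0 < L)
    (hg : ∀ x y, dist (g x) (g y) ≤ L * dist x y) (hA : eLpNorm g 2 volume ≤ ENNReal.ofReal A)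
    (x₀ : EuclideanSpace ℝ (Fin 3)) :
    ‖g x₀‖ ≤ interpolationConstant (volume : Measure (EuclideanSpace ℝ (Fin 3)))
      * A ^ ((2 : ℝ) / 5) * L ^ ((3 : ℝ) / 5) := by
  convert norm_le_interpolationConstant_mul volume hA₀ hL hg hA x₀ using 3 <;>
    norm_num [finrank_euclideanSpace_fin]

theorem dist_le_mul_of_norm_fderiv_le {E F : Type*} [NormedAddCommGroup E] [NormedSpace ℝ E]
    [NormedAddCommGroup F] [NormedSpace ℝ F] {f : E → F} {C : ℝ} (hf : Differentiable ℝ f)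
    (hC : ∀ x, ‖fderiv ℝ f x‖ ≤ C) (x y : E) : dist (f x) (f y) ≤ C * dist x y := by
  simpa only [dist_eq_norm] using convex_univ.norm_image_sub_le_of_norm_fderiv_le
    (fun z _ => hf z) (fun z _ => hC z) (Set.mem_univ y) (Set.mem_univ x)

/-- If `f : ℝ³ → ℂ` satisfies `‖f‖_{L²} ≤ a₁`, `‖∇f‖_{L²} ≤ a₂`, and both
`‖∇f‖_{L^∞} ≤ b` and `‖∇²f‖_{L^∞} ≤ b`, then
`‖f‖_{L^∞} ≤ C a₁^{2/5} a₂^{6/25} b^{9/25}` for a universal constant `C`. -/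
theorem stmt_1 :
    ∃ C : ℝ, 0 < C ∧
      ∀ (f : EuclideanSpace ℝ (Fin 3) → ℂ) (a₁ a₂ b : ℝ),
        0 < a₁ → 0 < a₂ → 0 < b →
        ContDiff ℝ 2 f →
        eLpNorm f 2 volume ≤ ENNReal.ofReal a₁ →
        eLpNorm (fun x => fderiv ℝ f x) 2 volume ≤ ENNReal.ofReal a₂ →
        (∀ x, ‖fderiv ℝ f x‖ ≤ b) →
        (∀ x, ‖iteratedFDeriv ℝ 2 f x‖ ≤ b) →
        ∀ x, ‖f x‖ ≤ C * a₁ ^ ((2 : ℝ) / 5) * a₂ ^ ((6 : ℝ) / 25) * b ^ ((9 : ℝ) / 25) := by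
  set c := interpolationConstant (volume : Measure (EuclideanSpace ℝ (Fin 3)))
  have hc : 0 < c := interpolationConstant_pos volume
  refine ⟨c * c ^ ((3 : ℝ) / 5), by positivity, ?_⟩
  intro f a₁ a₂ b ha₁ ha₂ hb hf hf_L2 hdf_L2 _ hd2f_bound x
  have hdf : Differentiable ℝ (fderiv ℝ f) :=
    (hf.fderiv_right (m := 1) le_rfl).differentiable one_ne_zero
  have hd2f (y) : ‖fderiv ℝ (fderiv ℝ f) y‖ ≤ b := by
    rw [← norm_iteratedFDeriv_one, norm_iteratedFDeriv_fderiv]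
    exact hd2f_bound y
  have hgrad : ∀ y, ‖fderiv ℝ f y‖ ≤ c * a₂ ^ ((2 : ℝ) / 5) * b ^ ((3 : ℝ) / 5) :=
    norm_le_interpolationConstant_mul_fin_three ha₂.le hb
      (dist_le_mul_of_norm_fderiv_le hdf hd2f) hdf_L2
  calc ‖f x‖
      ≤ c * a₁ ^ ((2 : ℝ) / 5) * (c * a₂ ^ ((2 : ℝ) / 5) * b ^ ((3 : ℝ) / 5)) ^ ((3 : ℝ) / 5) :=
        norm_le_interpolationConstant_mul_fin_three ha₁.le (by positivity)
          (dist_le_mul_of_norm_fderiv_le (hf.differentiable two_ne_zero) hgrad) hf_L2 x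
    _ = c * c ^ ((3 : ℝ) / 5) * a₁ ^ ((2 : ℝ) / 5) * a₂ ^ ((6 : ℝ) / 25) * b ^ ((9 : ℝ) / 25) := by
        rw [Real.mul_rpow (by positivity) (by positivity), Real.mul_rpow hc.le (by positivity),
          ← Real.rpow_mul ha₂.le, ← Real.rpow_mul hb.le]
        norm_num
        ring
end
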